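/- For every RDF graph G and every non-recursive SHACL document M, there exists a unique total assignment ρ that is faithful with respect to G and M̃ (the document M with all targets removed); moreover, every assignment σ that is faithful with respect to G and M equals ρ. -/

import Mathlib

/-!
STATEMENT 1.  For every graph and every (finite, name-unique, reference-closed)
non-recursive SHACL document `M` there is a unique total assignment faithful
w.r.t. `G` and `M̃`, and every assignment faithful w.r.t. `G` and `M`
coincides with it (on the shape names of `M`).
-/

namespace SHACL

/-- RDF nodes: a single infinite domain of RDF terms. -/
abbrev Node := ℕ

/-- Shape names. -/
abbrev SName := ℕ

/-- An RDF graph: a set of (subject, predicate, object) triples. -/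
abbrev Graph := Set (Node × Node × Node)

/-- Kleene's three truth values. -/
inductive K3 | t | f | u
deriving DecidableEq

/-- An assignment maps each node and shape name to `some true` (the shape
literal `s` is assigned), `some false` (the literal `¬s` is assigned) or
`none` (neither); this representation guarantees that `s` and `¬s` are never
assigned simultaneously. -/
abbrev Assignment := Node → SName → Option Bool

/-- SHACL constraints (abstract core syntax): the empty constraint, shape
references, equality with a constant, a graph atom (existence of a given
triple), existential quantification along a property, negation and
conjunction. -/
inductive Constraint
  | top
  | ref (s : SName)
  | eqc (c : Node)
  | hasTriple (p o : Node)
  | exPath (p : Node) (d : Constraint)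
  | not (d : Constraint)
  | and (d₁ d₂ : Constraint)

open Classical in
/-- Three-valued (Kleene) evaluation `⟦d⟧^{G,σ}(n)` of a constraint at a node:
a shape reference `s(x)` is `True` if `s ∈ σ(x)`, `False` if `¬s ∈ σ(x)` and
`Undefined` otherwise. -/
noncomputable def eval (G : Graph) (σ : Assignment) : Constraint → Node → K3
  | .top, _ => .t
  | .ref s, n =>
      match σ n s with
      | some true => .t
      | some false => .f
      | none => .u
  | .eqc c, n => if n = c then .t else .f
  | .hasTriple p o, n => if (n, p, o) ∈ G then .t else .f
  | .exPath p d, n =>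
      if ∃ m, (n, p, m) ∈ G ∧ eval G σ d m = .t then .t
      else if ∀ m, (n, p, m) ∈ G → eval G σ d m = .f then .f
      else .u
  | .not d, n =>
      match eval G σ d n with
      | .t => .f
      | .f => .t
      | .u => .u
  | .and d₁ d₂, n =>
      match eval G σ d₁ n, eval G σ d₂ n with
      | .f, _ => .f
      | _, .f => .f
      | .t, .t => .t
      | _, _ => .u

/-- A SHACL shape: a name, a target definition (a unary query over graphs)
and a constraint. -/
structure Shape where
  name : SName
  target : Graph → Set Node
  constraint : Constraint

/-- A SHACL document: a set of shapes. -/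
abbrev Document := Set Shape

/-- `M̃`: the document `M` with every target definition replaced by the empty
target. -/
def minusTargets (M : Document) : Document :=
  (fun sh => { name := sh.name, target := fun _ => (∅ : Set Node),
               constraint := sh.constraint : Shape }) '' M

/-- Faithfulness of an assignment `σ` w.r.t. a graph `G` and a document `M`:
(1) for every shape `⟨s,t,d⟩` of `M` and node `n`, `s ∈ σ(n)` iff
    `⟦d⟧^{G,σ}(n) = True` and `¬s ∈ σ(n)` iff `⟦d⟧^{G,σ}(n) = False`;
(2) every node targeted by `t` in `G` satisfies `s ∈ σ(n)`. -/
def Faithful (G : Graph) (σ : Assignment) (M : Document) : Prop :=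
  (∀ sh ∈ M, ∀ n : Node,
      (σ n sh.name = some true ↔ eval G σ sh.constraint n = .t) ∧
      (σ n sh.name = some false ↔ eval G σ sh.constraint n = .f)) ∧
  (∀ sh ∈ M, ∀ n ∈ sh.target G, σ n sh.name = some true)


/-- The shape names directly referenced by a constraint. -/
def Constraint.refs : Constraint → Set SName
  | .ref s => {s}
  | .not d => d.refs
  | .and d₁ d₂ => d₁.refs ∪ d₂.refs
  | .exPath _ d => d.refs
  | _ => ∅

/-- The shape names of a document. -/
def namesOf (M : Document) : Set SName := Shape.name '' M

/-- `s₁` directly references `s₂` in `M`: some shape of `M` named `s₁` has a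
constraint mentioning `s₂`. -/
def refersTo (M : Document) (s₁ s₂ : SName) : Prop :=
  ∃ sh ∈ M, sh.name = s₁ ∧ s₂ ∈ sh.constraint.refs

/-- A document is recursive if some shape (transitively) references itself. -/
def Recursive (M : Document) : Prop :=
  ∃ s, Relation.TransGen (refersTo M) s s

/-- An assignment is total w.r.t. a set of shape names if it assigns either
`s` or `¬s` to every node, for every shape name `s` in the set. -/
def Assignment.TotalOn (σ : Assignment) (S : Set SName) : Prop :=
  ∀ n : Node, ∀ s ∈ S, (σ n s).isSome

/-- Two assignments agree on the shape names of a document. -/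
def eqOn (M : Document) (σ ρ : Assignment) : Prop :=
  ∀ n : Node, ∀ s ∈ namesOf M, σ n s = ρ n s

/-!
Condition (1) of faithfulness w.r.t. `M̃` says that `σ(n, s)` is the Kleene value of the
constraint of `s` at `n`, which depends only on `σ` at the shape names that `s` references.
For a finite, reference-closed, non-recursive document these references form a well-founded
relation, so well-founded recursion produces a solution and well-founded induction shows that
any two solutions agree on the shape names of `M`. The solution is total because a constraint
evaluated over two-valued references is two-valued, and an assignment faithful w.r.t. `M`
is faithful w.r.t. `M̃`, since dropping targets only drops condition (2).
-/

theorem _root_.WellFounded.of_transGen_irrefl_of_finite {α : Type*} {r : α → α → Prop}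
    {s : Set α} (hs : s.Finite) (hdom : ∀ a b, r a b → a ∈ s)
    (hirr : ∀ a, ¬ Relation.TransGen r a a) : WellFounded r := by
  let below (b : α) : Set α := {a | Relation.TransGen r a b}
  have hbelow_finite (b : α) : (below b).Finite :=
    hs.subset fun a hab => by
      obtain ⟨c, hac, -⟩ := Relation.TransGen.head'_iff.mp hab
      exact hdom a c hac
  have hlt (a b : α) (hab : r a b) : (below a).ncard < (below b).ncard :=
    Set.ncard_lt_ncard
      ⟨fun _ hxa => hxa.tail hab, fun hsub => hirr a (hsub (.single hab))⟩
      (hbelow_finite b)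
  exact Subrelation.wf (hlt _ _) (measure fun b => (below b).ncard).wf

def K3.toOption : K3 → Option Bool
  | .t => some true
  | .f => some false
  | .u => none

theorem K3.eq_toOption_iff {o : Option Bool} {k : K3} :
    o = k.toOption ↔ (o = some true ↔ k = .t) ∧ (o = some false ↔ k = .f) := by
  cases o with
  | none => cases k <;> simp [K3.toOption]
  | some b => cases b <;> cases k <;> simp [K3.toOption]

theorem eval_congr (G : Graph) {σ τ : Assignment} {d : Constraint}
    (h : ∀ s ∈ d.refs, ∀ m, σ m s = τ m s) : eval G σ d = eval G τ d := by
  induction d with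
  | ref s => funext n; simp only [eval, h s rfl n]
  | exPath p d ih => funext n; unfold eval; rw [ih h]
  | not d ih => funext n; unfold eval; rw [ih h]
  | and d₁ d₂ ih₁ ih₂ =>
    funext n
    simp only [eval, ih₁ fun s hs => h s (Or.inl hs), ih₂ fun s hs => h s (Or.inr hs)]
  | top | eqc | hasTriple => rfl

theorem eval_ne_u (G : Graph) {σ : Assignment} {d : Constraint}
    (h : ∀ s ∈ d.refs, ∀ m, (σ m s).isSome) (n : Node) : eval G σ d n ≠ .u := by
  induction d generalizing n with
  | top => simp [eval]
  | ref s =>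
    obtain ⟨b, hb⟩ := Option.isSome_iff_exists.mp (h s rfl n)
    cases b <;> simp [eval, hb]
  | eqc c => unfold eval; split_ifs <;> simp
  | hasTriple p o => unfold eval; split_ifs <;> simp
  | exPath p d ih =>
    unfold eval
    split_ifs with hex hall
    · simp
    · simp
    · refine absurd (fun m hm => ?_) hall
      cases hk : eval G σ d m
      · exact absurd ⟨m, hm, hk⟩ hex
      · rfl
      · exact absurd hk (ih h m)
  | not d ih =>
    have hd := ih h n
    unfold eval
    revert hd
    cases eval G σ d n <;> simp
  | and d₁ d₂ ih₁ ih₂ =>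
    have h₁ := ih₁ (fun s hs => h s (Or.inl hs)) n
    have h₂ := ih₂ (fun s hs => h s (Or.inr hs)) n
    unfold eval
    revert h₁ h₂
    cases eval G σ d₁ n <;> cases eval G σ d₂ n <;> simp

theorem Faithful.minusTargets {G : Graph} {σ : Assignment} {M : Document}
    (hσ : Faithful G σ M) : Faithful G σ (minusTargets M) :=
  ⟨by rintro _ ⟨sh, hsh, rfl⟩; exact hσ.1 sh hsh, by rintro _ ⟨sh, -, rfl⟩ _ ⟨⟩⟩

theorem faithful_minusTargets_iff {G : Graph} {σ : Assignment} {M : Document} :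
    Faithful G σ (minusTargets M) ↔
      ∀ sh ∈ M, ∀ n, σ n sh.name = (eval G σ sh.constraint n).toOption := by
  simp only [Faithful, minusTargets, Set.forall_mem_image, K3.eq_toOption_iff]
  exact ⟨fun h => h.1, fun h => ⟨h, fun _ _ _ hn => hn.elim⟩⟩

theorem wellFounded_flip_refersTo {M : Document} (hfin : M.Finite)
    (hclosed : ∀ sh ∈ M, sh.constraint.refs ⊆ namesOf M) (hnr : ¬ Recursive M) :
    WellFounded (flip (refersTo M)) :=
  .of_transGen_irrefl_of_finite (hfin.image Shape.name)
    (fun _ _ ⟨sh, hsh, _, hs⟩ => hclosed sh hsh hs)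
    (fun s hs => hnr ⟨s, Relation.transGen_swap.mp hs⟩)

theorem eqOn_of_faithful_minusTargets {G : Graph} {M : Document}
    (hwf : WellFounded (flip (refersTo M))) (hclosed : ∀ sh ∈ M, sh.constraint.refs ⊆ namesOf M)
    {σ τ : Assignment} (hσ : Faithful G σ (minusTargets M))
    (hτ : Faithful G τ (minusTargets M)) : eqOn M σ τ := by
  suffices ∀ s ∈ namesOf M, ∀ n, σ n s = τ n s from fun n s hs => this s hs n
  intro s
  induction s using hwf.induction with
  | _ s ih =>
    rintro ⟨sh, hsh, rfl⟩ n
    have hrefs : eval G σ sh.constraint = eval G τ sh.constraint :=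
      eval_congr G fun s' hs' => ih s' ⟨sh, hsh, rfl, hs'⟩ (hclosed sh hsh hs')
    rw [faithful_minusTargets_iff.mp hσ sh hsh, faithful_minusTargets_iff.mp hτ sh hsh, hrefs]

open Classical in
noncomputable def constraintOf (M : Document) (s : SName) : Constraint :=
  if h : ∃ sh ∈ M, sh.name = s then h.choose.constraint else .top

theorem refersTo_of_mem_refs_constraintOf {M : Document} {s s' : SName}
    (hs' : s' ∈ (constraintOf M s).refs) : refersTo M s s' := by
  unfold constraintOf at hs'
  split_ifs at hs' with h
  · exact ⟨h.choose, h.choose_spec.1, h.choose_spec.2, hs'⟩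
  · exact hs'.elim

theorem constraintOf_name {M : Document}
    (hname : ∀ sh₁ ∈ M, ∀ sh₂ ∈ M, sh₁.name = sh₂.name → sh₁ = sh₂)
    {sh : Shape} (hsh : sh ∈ M) : constraintOf M sh.name = sh.constraint := by
  have h : ∃ sh' ∈ M, sh'.name = sh.name := ⟨sh, hsh, rfl⟩
  rw [constraintOf, dif_pos h, hname _ h.choose_spec.1 _ hsh h.choose_spec.2]

open Classical in
noncomputable def canonicalAssignment (G : Graph) {M : Document}
    (hwf : WellFounded (flip (refersTo M))) : Assignment :=
  fun n s => hwf.fix (C := fun _ => Node → Option Bool)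
    (fun s rec n => (eval G (fun m s' => if h : refersTo M s s' then rec s' h m else none)
      (constraintOf M s) n).toOption) s n

theorem canonicalAssignment_apply (G : Graph) {M : Document}
    (hwf : WellFounded (flip (refersTo M))) (n : Node) (s : SName) :
    canonicalAssignment G hwf n s =
      (eval G (canonicalAssignment G hwf) (constraintOf M s) n).toOption := by
  conv_lhs => rw [canonicalAssignment, hwf.fix_eq]
  refine congrArg (K3.toOption <| · n) (eval_congr G fun s' hs' m => ?_)
  rw [dif_pos (refersTo_of_mem_refs_constraintOf hs')]
  rfl

theorem canonicalAssignment_isSome (G : Graph) {M : Document}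
    (hwf : WellFounded (flip (refersTo M))) (n : Node) (s : SName) :
    (canonicalAssignment G hwf n s).isSome := by
  induction s using hwf.induction generalizing n with
  | _ s ih =>
    have hne := eval_ne_u G (fun s' hs' m => ih s' (refersTo_of_mem_refs_constraintOf hs') m) n
    rw [canonicalAssignment_apply]
    revert hne
    cases eval G (canonicalAssignment G hwf) (constraintOf M s) n <;> simp [K3.toOption]

theorem faithful_canonicalAssignment (G : Graph) {M : Document}
    (hwf : WellFounded (flip (refersTo M)))
    (hname : ∀ sh₁ ∈ M, ∀ sh₂ ∈ M, sh₁.name = sh₂.name → sh₁ = sh₂) :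
    Faithful G (canonicalAssignment G hwf) (minusTargets M) :=
  faithful_minusTargets_iff.mpr fun sh hsh n => by
    rw [canonicalAssignment_apply, constraintOf_name hname hsh]

/-- Lemma on non-recursive documents: for every graph `G`
and non-recursive SHACL document `M` (a finite set of shapes whose names
uniquely identify them and whose shape references stay inside the document),
there is a total assignment `ρ` faithful w.r.t. `G` and `M̃`, it is unique
(as a map on the shape names of `M`), and every assignment faithful w.r.t.
`G` and `M` equals `ρ`. -/
theorem unique_total_faithful_of_nonRecursive
    (G : Graph) (M : Document)
    (hfin : M.Finite)
    (hname : ∀ sh₁ ∈ M, ∀ sh₂ ∈ M, Shape.name sh₁ = Shape.name sh₂ → sh₁ = sh₂)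
    (hclosed : ∀ sh ∈ M, Constraint.refs sh.constraint ⊆ namesOf M)
    (hnr : ¬ Recursive M) :
    ∃ ρ : Assignment,
      ρ.TotalOn (namesOf M) ∧ Faithful G ρ (minusTargets M) ∧
      (∀ ρ' : Assignment, ρ'.TotalOn (namesOf M) →
          Faithful G ρ' (minusTargets M) → eqOn M ρ' ρ) ∧
      (∀ σ : Assignment, Faithful G σ M → eqOn M σ ρ) := by
  have hwf := wellFounded_flip_refersTo hfin hclosed hnr
  have hρ := faithful_canonicalAssignment G hwf hname
  exact ⟨canonicalAssignment G hwf, fun n s _ => canonicalAssignment_isSome G hwf n s, hρ,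
    fun _ _ hρ' => eqOn_of_faithful_minusTargets hwf hclosed hρ' hρ,
    fun _ hσ => eqOn_of_faithful_minusTargets hwf hclosed hσ.minusTargets hρ⟩

end SHACL
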